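/- arXiv:1911.10456 — 2 statements merged into one kernel-verified Lean document; each statement's English description precedes it below -/
import Mathlib

section
/- Let q = p^m be a power of a prime p, a ∈ F_{q²} with a^{q+1} = −1, and L an n×n unitary matrix over F_{q²}. Suppose n ≢ 0 (mod p), δ = 0, γ ∈ F_{q²} satisfies γ^{q+1} = 2−n with 2−n ≠ 0 in F_{q²}, and θ ∈ F_{q²} satisfies θ^{q+1} = n. Then n−1+aθγ^q ≠ 0 in F_{q²}, and for β = (n−1+aθγ^q)^{−1}, α = aθβ, λ = a, the code generated by the bordered matrix G (with first row (θ, β,…,β, α, λ(L₁+⋯+Lₙ)) and (i+1)-st row (δ, (Jₙ−Iₙ)ᵢ, γ, aLᵢ)) is a Hermitian self-dual code of length 2n+2 and dimension n+1. -/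
open Matrix BigOperators Finset

/-- The Hermitian inner product `x * y = ∑ i, x i * (y i)^q` over `F_{q²}`. -/
def hermInner (q : ℕ) {F : Type} [CommRing F] {ι : Type} [Fintype ι]
    (x y : ι → F) : F :=
  ∑ i, x i * y i ^ q

/-- The Hermitian dual of a set of vectors. -/
def hermDual (q : ℕ) {F : Type} [CommRing F] {ι : Type} [Fintype ι]
    (C : Set (ι → F)) : Set (ι → F) :=
  {y | ∀ x ∈ C, hermInner q x y = 0}

/-- The code generated by a matrix: the span of its rows. -/
def rowSpan {F : Type} [Field F] {k : ℕ} {ι : Type} (G : Matrix (Fin k) ι F) :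
    Submodule F (ι → F) :=
  Submodule.span F (Set.range fun i => G i)

/-!
With `σ x = x ^ q`, an involutive automorphism of `F_{q²}`, the Hermitian product is the
sesquilinear form `∑ xᵢ σ(yᵢ)`. Since `L` is unitary and `a σ(a) = -1`, the products of the rows
of `G` reduce to `θ σ(θ) = n`, `γ σ(γ) = 2 - n` and `(n - 1 + aθσ(γ)) β = 1`, so the code is
self-orthogonal. Its rows are independent (the first coordinate separates row `0`, and `L` is
invertible), so its dimension `n + 1` is half the length; the Hermitian dual of the row space of
`G` is the image of `ker G` under `y ↦ σ⁻¹ ∘ y`, of the same size, so the code is self-dual.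
Finally `n - 1 + aθσ(γ) = 0` would give, taking norms, `(1 - n)² = -n (2 - n)`, i.e. `1 = 0`.
-/

lemma exists_involutive_ringHom_eq_pow {F : Type} [Field F] [Fintype F] {p m q : ℕ}
    [Fact p.Prime] [CharP F p] (hq : q = p ^ m) (hF : Fintype.card F = q ^ 2) :
    ∃ σ : F →+* F, (∀ x, σ x = x ^ q) ∧ Function.Involutive σ := by
  have hσ : ∀ x, iterateFrobenius F p m x = x ^ q := fun x => by
    rw [iterateFrobenius_def, hq]
  refine ⟨iterateFrobenius F p m, hσ, fun x => ?_⟩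
  rw [hσ, hσ, ← pow_mul, ← sq, ← hF, FiniteField.pow_card]

section HermitianForm

variable {F ι : Type} [Field F] [Fintype ι] (σ : F →+* F)

def hermForm : (ι → F) →ₗ[F] (ι → F) →ₛₗ[σ] F :=
  LinearMap.mk₂'ₛₗ (RingHom.id F) σ (fun x y => ∑ i, x i * σ (y i))
    (fun _ _ _ => by simp only [Pi.add_apply, add_mul, sum_add_distrib])
    (fun _ _ _ => by simp only [Pi.smul_apply, smul_eq_mul, mul_sum, mul_assoc, RingHom.id_apply])
    (fun _ _ _ => by simp only [Pi.add_apply, map_add, mul_add, sum_add_distrib])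
    (fun _ _ _ => by
      simp only [Pi.smul_apply, smul_eq_mul, map_mul, mul_sum]
      exact sum_congr rfl fun _ _ => by ring)

lemma hermForm_apply (x y : ι → F) : hermForm σ x y = ∑ i, x i * σ (y i) := rfl

lemma hermInner_eq_hermForm {q : ℕ} (hσ : ∀ x, σ x = x ^ q) (x y : ι → F) :
    hermInner q x y = hermForm σ x y := by
  simp only [hermInner, hermForm_apply, hσ]

lemma hermForm_swap (hσ : Function.Involutive σ) (x y : ι → F) :
    hermForm σ y x = σ (hermForm σ x y) := by
  simp only [hermForm_apply, map_sum, map_mul, hσ _, mul_comm]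

lemma hermForm_single_left [DecidableEq ι] (i : ι) (c : F) (y : ι → F) :
    hermForm σ (Pi.single i c) y = c * σ (y i) := by
  simp [hermForm_apply, Pi.single_apply]

lemma hermForm_single_right [DecidableEq ι] (x : ι → F) (j : ι) (c : F) :
    hermForm σ x (Pi.single j c) = x j * σ c := by
  simp [hermForm_apply, Pi.single_apply, apply_ite σ]

lemma hermForm_one_one : hermForm σ (1 : ι → F) 1 = Fintype.card ι := by
  simp [hermForm_apply]

lemma hermForm_unique {u : Type} [Unique u] (x y : u → F) :
    hermForm σ x y = x default * σ (y default) := by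
  simp [hermForm_apply]

lemma hermForm_sumElim {κ : Type} [Fintype κ] (x x' : ι → F) (y y' : κ → F) :
    hermForm σ (Sum.elim x y) (Sum.elim x' y') = hermForm σ x x' + hermForm σ y y' := by
  simp [hermForm_apply, Fintype.sum_sum_type]

lemma hermForm_row_row {κ : Type} (L : Matrix κ ι F) (i j : κ) :
    hermForm σ (L.row i) (L.row j) = (L * (L.map σ)ᵀ) i j := by
  simp [hermForm_apply, Matrix.mul_apply, Matrix.row]

end HermitianForm

section SelfDual

variable {F ι : Type} [Field F] [Fintype ι] {q k : ℕ} (σ : F →+* F)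

lemma Submodule.ncard_eq_pow_finrank [Finite F] {V : Type} [AddCommGroup V] [Module F V]
    [Module.Finite F V] (K : Submodule F V) :
    (K : Set V).ncard = Nat.card F ^ Module.finrank F K := by
  rw [← Nat.card_coe_set_eq]
  exact Module.natCard_eq_pow_finrank (V := K)

lemma mem_hermDual_rowSpan_iff (hσ : ∀ x, σ x = x ^ q) (G : Matrix (Fin k) ι F) (y : ι → F) :
    y ∈ hermDual q (rowSpan G) ↔ ∀ i, hermForm σ (G i) y = 0 := by
  simp only [hermDual, Set.mem_ofPred_eq, hermInner_eq_hermForm σ hσ]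
  refine ⟨fun h i => h _ (Submodule.subset_span ⟨i, rfl⟩), fun h x hx => ?_⟩
  have hrows : rowSpan G ≤ LinearMap.ker ((hermForm σ).flip y) :=
    Submodule.span_le.2 (by rintro _ ⟨i, rfl⟩; exact h i)
  exact hrows hx

theorem coe_rowSpan_eq_hermDual [Finite F] (hσ : ∀ x, σ x = x ^ q) (G : Matrix (Fin k) ι F)
    (horth : ∀ i j, hermForm σ (G i) (G j) = 0)
    (hdim : 2 * Module.finrank F (rowSpan G) = Fintype.card ι) :
    (rowSpan G : Set (ι → F)) = hermDual q (rowSpan G) := by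
  let conj : (ι → F) → (ι → F) := fun y => σ ∘ y
  have hconj : conj.Bijective := by
    have hinj : conj.Injective := fun y z h => funext fun i => σ.injective (congrFun h i)
    exact ⟨hinj, Finite.injective_iff_surjective.1 hinj⟩
  have hdual : hermDual q (rowSpan G) = conj ⁻¹' LinearMap.ker G.mulVecLin := by
    ext y
    simp only [mem_hermDual_rowSpan_iff σ hσ, Set.mem_preimage, SetLike.mem_coe,
      LinearMap.mem_ker, funext_iff, Matrix.mulVecLin_apply, Matrix.mulVec, dotProduct,
      hermForm_apply, Pi.zero_apply, conj, Function.comp_apply]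
  have hsub : (rowSpan G : Set (ι → F)) ⊆ hermDual q (rowSpan G) := fun y hy =>
    (mem_hermDual_rowSpan_iff σ hσ G y).2 fun i =>
      (Submodule.span_le (p := LinearMap.ker (hermForm σ (G i)))).2
        (by rintro _ ⟨j, rfl⟩; exact horth i j) hy
  have hker : Module.finrank F (rowSpan G) + Module.finrank F (LinearMap.ker G.mulVecLin)
      = Fintype.card ι := by
    have hrank : G.rank = Module.finrank F (rowSpan G) := G.rank_eq_finrank_span_row
    rw [← hrank, Matrix.rank, LinearMap.finrank_range_add_finrank_ker,
      Module.finrank_fintype_fun_eq_card]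
  refine Set.eq_of_subset_of_ncard_le hsub ?_ (Set.toFinite _)
  rw [hdual, Set.ncard_preimage_of_injective_subset_range hconj.1 (by simp [hconj.2.range_eq]),
    Submodule.ncard_eq_pow_finrank, Submodule.ncard_eq_pow_finrank]
  exact Nat.pow_le_pow_right Nat.card_pos (by omega)

end SelfDual

lemma sub_one_add_mul_ne_zero {F : Type} [Field F] (σ : F →+* F) (hσ : Function.Involutive σ)
    {c a θ γ : F} (hc : σ c = c) (ha : a * σ a = -1) (hθ : θ * σ θ = c)
    (hγ : γ * σ γ = 2 - c) : c - 1 + a * θ * σ γ ≠ 0 := by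
  intro h
  have ht : a * θ * σ γ = 1 - c := by linear_combination h
  have hσt : σ a * σ θ * γ = 1 - c := by
    simpa only [map_mul, map_sub, map_one, hσ γ, hc] using congrArg σ ht
  have hnorm : (a * θ * σ γ) * (σ a * σ θ * γ) = (a * σ a) * (θ * σ θ) * (γ * σ γ) := by ring
  rw [ht, hσt, ha, hθ, hγ] at hnorm
  exact one_ne_zero (by linear_combination hnorm)

section BorderedMatrix

variable {F : Type} [Field F] (σ : F →+* F) {n : ℕ}

/-- The matrix `G` with `δ = 0`, `λ = a`, `α = aθβ`; the row `(Jₙ - Iₙ)ᵢ` is `1 - Pi.single i 1`. -/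
def borderedMatrix (a θ β γ : F) (L : Matrix (Fin n) (Fin n) F) :
    Matrix (Fin (n + 1)) ((Unit ⊕ Fin n) ⊕ (Unit ⊕ Fin n)) F :=
  Fin.cons
    (Sum.elim (Sum.elim (fun _ => θ) (β • 1)) (Sum.elim (fun _ => a * θ * β) (a • ∑ k, L.row k)))
    fun i => Sum.elim (Sum.elim 0 (1 - Pi.single i 1)) (Sum.elim (fun _ => γ) (a • L.row i))

variable {a θ β γ : F} {L : Matrix (Fin n) (Fin n) F}

lemma hermForm_borderedMatrix_zero_zero (hL : L * (L.map σ)ᵀ = 1) (ha : a * σ a = -1)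
    (hθ : θ * σ θ = n) :
    hermForm σ (borderedMatrix a θ β γ L 0) (borderedMatrix a θ β γ L 0) = 0 := by
  have hsum : hermForm σ (∑ k, L.row k) (∑ k, L.row k) = n := by
    simp [LinearMap.sum_apply, hermForm_row_row, hL, Matrix.one_apply]
  simp only [borderedMatrix, Fin.cons_zero, hermForm_sumElim, hermForm_unique,
    map_smul, map_smulₛₗ, LinearMap.smul_apply, hermForm_one_one, hsum, smul_eq_mul,
    Fintype.card_fin, map_mul]
  linear_combination (1 + β * σ β * σ a * a) * hθ + (n * (1 + β * σ β)) * ha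

lemma hermForm_borderedMatrix_zero_succ (hL : L * (L.map σ)ᵀ = 1) (ha : a * σ a = -1)
    (hβ : (n - 1 + a * θ * σ γ) * β = 1) (i : Fin n) :
    hermForm σ (borderedMatrix a θ β γ L 0) (borderedMatrix a θ β γ L i.succ) = 0 := by
  have hsum : hermForm σ (∑ k, L.row k) (L.row i) = 1 := by
    simp [LinearMap.sum_apply, hermForm_row_row, hL, Matrix.one_apply]
  simp only [borderedMatrix, Fin.cons_zero, Fin.cons_succ, hermForm_sumElim,
    hermForm_unique, map_smul, map_smulₛₗ, LinearMap.smul_apply, map_sub, hermForm_one_one,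
    hermForm_single_right, hsum, smul_eq_mul, Fintype.card_fin, map_one, Pi.one_apply, map_zero]
  linear_combination hβ + ha

lemma hermForm_borderedMatrix_succ_succ (hL : L * (L.map σ)ᵀ = 1) (ha : a * σ a = -1)
    (hγ : γ * σ γ = 2 - n) (i j : Fin n) :
    hermForm σ (borderedMatrix a θ β γ L i.succ) (borderedMatrix a θ β γ L j.succ) = 0 := by
  simp only [borderedMatrix, Fin.cons_succ, hermForm_sumElim,
    hermForm_unique, map_smul, map_smulₛₗ, LinearMap.smul_apply, map_sub, LinearMap.sub_apply,
    hermForm_one_one, hermForm_single_left, hermForm_single_right, hermForm_row_row, hL,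
    smul_eq_mul, Fintype.card_fin, map_one, Pi.one_apply, map_zero, Pi.single_apply,
    Matrix.one_apply]
  obtain rfl | hij := eq_or_ne i j
  · simp only [if_true]
    linear_combination hγ + ha
  · simp only [hij, hij.symm, if_false]
    linear_combination hγ

lemma hermForm_borderedMatrix_eq_zero (hσ : Function.Involutive σ) (hL : L * (L.map σ)ᵀ = 1)
    (ha : a * σ a = -1) (hθ : θ * σ θ = n) (hγ : γ * σ γ = 2 - n)
    (hβ : (n - 1 + a * θ * σ γ) * β = 1) (i j : Fin (n + 1)) :
    hermForm σ (borderedMatrix a θ β γ L i) (borderedMatrix a θ β γ L j) = 0 := by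
  induction i using Fin.cases with
  | zero =>
    induction j using Fin.cases with
    | zero => exact hermForm_borderedMatrix_zero_zero σ hL ha hθ
    | succ j => exact hermForm_borderedMatrix_zero_succ σ hL ha hβ j
  | succ i =>
    induction j using Fin.cases with
    | zero => rw [hermForm_swap σ hσ, hermForm_borderedMatrix_zero_succ σ hL ha hβ i, map_zero]
    | succ j => exact hermForm_borderedMatrix_succ_succ σ hL ha hγ i j

lemma linearIndependent_borderedMatrix (hL : LinearIndependent F L.row) (ha : a ≠ 0)
    (hθ : θ ≠ 0) : LinearIndependent F (borderedMatrix a θ β γ L).row := by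
  refine linearIndependent_finCons.2 ⟨?_, fun hmem => hθ ?_⟩
  · refine LinearIndependent.of_comp (LinearMap.funLeft F F (Sum.inr ∘ Sum.inr)) ?_
    convert hL.units_smul fun _ => Units.mk0 a ha
    ext i j
    simp [LinearMap.funLeft_apply, Units.smul_def]
  · have hspan : Submodule.span F (Set.range fun i : Fin n => (borderedMatrix a θ β γ L).row i.succ)
        ≤ LinearMap.ker (LinearMap.proj (Sum.inl (Sum.inl ()))) :=
      Submodule.span_le.2 (by rintro _ ⟨i, rfl⟩; rfl)
    exact hspan hmem

end BorderedMatrix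

theorem stmt9_general (p m q n : ℕ) (hp : p.Prime) (hq : q = p ^ m)
    (hnp : (n : ZMod p) ≠ 0)
    (F : Type) [Field F] [Fintype F] (hF : Fintype.card F = q ^ 2)
    (a : F) (ha : a ^ (q + 1) = -1)
    (L : Matrix (Fin n) (Fin n) F) (hL : L * (L.map (· ^ q))ᵀ = 1)
    (α β γ δ lam θ : F)
    (hδ : δ = 0)
    (hγ : γ ^ (q + 1) = 2 - (n : F))
    (hθ : θ ^ (q + 1) = (n : F))
    (hβ : β = ((n : F) - 1 + a * θ * γ ^ q)⁻¹)
    (hα : α = a * θ * β)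
    (hlam : lam = a)
    (G : Matrix (Fin (n + 1)) ((Unit ⊕ Fin n) ⊕ (Unit ⊕ Fin n)) F)
    (hG1 : G 0 (Sum.inl (Sum.inl ())) = θ)
    (hG2 : ∀ j, G 0 (Sum.inl (Sum.inr j)) = β)
    (hG3 : G 0 (Sum.inr (Sum.inl ())) = α)
    (hG4 : ∀ j, G 0 (Sum.inr (Sum.inr j)) = lam * ∑ k, L k j)
    (hG5 : ∀ i : Fin n, G i.succ (Sum.inl (Sum.inl ())) = δ)
    (hG6 : ∀ i j : Fin n, G i.succ (Sum.inl (Sum.inr j)) = if j = i then 0 else 1)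
    (hG7 : ∀ i : Fin n, G i.succ (Sum.inr (Sum.inl ())) = γ)
    (hG8 : ∀ i j : Fin n, G i.succ (Sum.inr (Sum.inr j)) = a * L i j) :
    ((n : F) - 1 + a * θ * γ ^ q ≠ 0) ∧
    (rowSpan G : Set ((Unit ⊕ Fin n) ⊕ (Unit ⊕ Fin n) → F)) = hermDual q (rowSpan G) ∧
    Module.finrank F (rowSpan G) = n + 1 := by
  have : Fact p.Prime := ⟨hp⟩
  have : CharP F p := charP_of_card_eq_prime_pow (f := m * 2) (by rw [hF, hq, pow_mul])
  obtain ⟨σ, hσ, hσσ⟩ := exists_involutive_ringHom_eq_pow hq hF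
  have hn : (n : F) ≠ 0 := by rwa [Ne, CharP.cast_eq_zero_iff F p, ← ZMod.natCast_eq_zero_iff]
  have hnorm : ∀ x : F, x ^ (q + 1) = x * σ x := fun x => by rw [hσ, pow_succ']
  rw [hnorm] at ha hθ hγ
  have hLσ : L * (L.map σ)ᵀ = 1 := by rwa [show ⇑σ = (· ^ q) from funext hσ]
  have hne : (n : F) - 1 + a * θ * γ ^ q ≠ 0 := by
    rw [← hσ]; exact sub_one_add_mul_ne_zero σ hσσ (map_natCast σ n) ha hθ hγ
  have hβ' : ((n : F) - 1 + a * θ * σ γ) * β = 1 := by rw [hβ, hσ]; exact mul_inv_cancel₀ hne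
  have hGB : G = borderedMatrix a θ β γ L := by
    subst hα hlam hδ
    ext i j
    induction i using Fin.cases <;> rcases j with (⟨⟨⟩⟩ | j) | (⟨⟨⟩⟩ | j) <;>
      simp [borderedMatrix, Pi.single_apply, Finset.sum_apply, sub_ite, *]
  have hindep : LinearIndependent F (borderedMatrix a θ β γ L).row :=
    linearIndependent_borderedMatrix
      (Matrix.linearIndependent_rows_iff_isUnit.2 ((L.isUnit_iff_isUnit_det).2
        (Matrix.isUnit_det_of_right_inverse hLσ)))
      (left_ne_zero_of_mul (ha ▸ neg_ne_zero.2 one_ne_zero)) (left_ne_zero_of_mul (hθ ▸ hn))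
  have hdim : Module.finrank F (rowSpan G) = n + 1 := by
    rw [hGB]
    exact (finrank_span_eq_card hindep).trans (Fintype.card_fin _)
  refine ⟨hne, coe_rowSpan_eq_hermDual σ hσ G ?_ ?_, hdim⟩
  · rw [hGB]; exact hermForm_borderedMatrix_eq_zero σ hσσ hLσ ha hθ hγ hβ'
  · simp only [hdim, Fintype.card_sum, Fintype.card_unit, Fintype.card_fin]; ring

/-- Theorem 1, case 2) of the paper. With `n ≢ 0 (mod p)`, `δ = 0`,
`γ^{q+1} = 2 - n ≠ 0`, `θ^{q+1} = n`, one has `n - 1 + aθγ^q ≠ 0`, and for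
`β = (n - 1 + aθγ^q)⁻¹`, `α = aθβ`, `λ = a`, the bordered matrix `G` generates a
Hermitian self-dual code of length `2n+2` and dimension `n+1`. -/
theorem stmt9 (p m q n : ℕ) (hp : p.Prime) (hm : 0 < m) (hq : q = p ^ m)
    (hnp : (n : ZMod p) ≠ 0)
    (F : Type) [Field F] [Fintype F] (hF : Fintype.card F = q ^ 2)
    (a : F) (ha : a ^ (q + 1) = -1)
    (L : Matrix (Fin n) (Fin n) F) (hL : L * (L.map (· ^ q))ᵀ = 1)
    (α β γ δ lam θ : F)
    (hδ : δ = 0)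
    (hγ : γ ^ (q + 1) = 2 - (n : F)) (hγ0 : (2 : F) - (n : F) ≠ 0)
    (hθ : θ ^ (q + 1) = (n : F))
    (hβ : β = ((n : F) - 1 + a * θ * γ ^ q)⁻¹)
    (hα : α = a * θ * β)
    (hlam : lam = a)
    (G : Matrix (Fin (n + 1)) ((Unit ⊕ Fin n) ⊕ (Unit ⊕ Fin n)) F)
    (hG1 : G 0 (Sum.inl (Sum.inl ())) = θ)
    (hG2 : ∀ j, G 0 (Sum.inl (Sum.inr j)) = β)
    (hG3 : G 0 (Sum.inr (Sum.inl ())) = α)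
    (hG4 : ∀ j, G 0 (Sum.inr (Sum.inr j)) = lam * ∑ k, L k j)
    (hG5 : ∀ i : Fin n, G i.succ (Sum.inl (Sum.inl ())) = δ)
    (hG6 : ∀ i j : Fin n, G i.succ (Sum.inl (Sum.inr j)) = if j = i then 0 else 1)
    (hG7 : ∀ i : Fin n, G i.succ (Sum.inr (Sum.inl ())) = γ)
    (hG8 : ∀ i j : Fin n, G i.succ (Sum.inr (Sum.inr j)) = a * L i j) :
    ((n : F) - 1 + a * θ * γ ^ q ≠ 0) ∧
    (rowSpan G : Set ((Unit ⊕ Fin n) ⊕ (Unit ⊕ Fin n) → F)) = hermDual q (rowSpan G) ∧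
    Module.finrank F (rowSpan G) = n + 1 :=
  stmt9_general p m q n hp hq hnp F hF a ha L hL α β γ δ lam θ hδ hγ hθ hβ hα hlam G hG1 hG2 hG3 hG4
    hG5 hG6 hG7 hG8
end

section
/- Let q = p^m with p an odd prime, a ∈ F_{q²} with a^{q+1} = −1, and L an n×n unitary matrix over F_{q²}. Suppose n ≢ 3 (mod p), δ = 1, γ ∈ F_{q²} satisfies γ^{q+1} = 1−n with 1−n ≠ 0 in F_{q²}, θ lies in the prime subfield F_p and satisfies (θ−2)²·n − (2θ²−4θ+4) = 0 in F_{q²}, β = 2, α = (2(1−n)−θ)·γ^{−q}, and λ = 0. Then the code generated by the bordered matrix G (with first row (θ, β,…,β, α, λ(L₁+⋯+Lₙ)) and (i+1)-st row (δ, (Jₙ−Iₙ)ᵢ, γ, aLᵢ)) is a Hermitian self-dual code of length 2n+2 and dimension n+1. -/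
open Matrix BigOperators Finset

/-!
The rows of `G` are pairwise orthogonal for the Hermitian form: the Gram entries reduce to
`a^{q+1} = -1`, `γ^{q+1} = 1 - n`, the unitarity of `L`, and, for the first row against itself,
to the quadratic relation satisfied by `θ`. They are linearly independent, since the block `aL`
is invertible and the first row vanishes on it. Finally, a self-orthogonal code of dimension
`k` in `F^{2k}` is self-dual: its Hermitian dual is the kernel of the conjugated generator
matrix, which has rank `k` as well because `x ↦ x^q` is an involutive automorphism of `F`, so
the dual also has dimension `k`.
-/

lemma pow_pow_eq_self_of_pow_eq_self {M : Type*} [Monoid M] {p : ℕ} (m : ℕ) {x : M}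
    (hx : x ^ p = x) : x ^ p ^ m = x := by
  induction m with
  | zero => simp
  | succ m ih => rw [pow_succ, pow_mul, ih, hx]

section FiniteField

variable {F : Type} [Field F] [Fintype F] {q : ℕ}

lemma two_ne_zero_of_odd_card (hF : Odd (Fintype.card F)) : (2 : F) ≠ 0 :=
  Ring.two_ne_zero fun h => by
    simpa [Nat.odd_iff.1 hF] using FiniteField.even_card_iff_char_two.1 h

lemma ne_zero_of_card_eq_sq (hF : Fintype.card F = q ^ 2) : q ≠ 0 := by
  rintro rfl
  exact Fintype.card_ne_zero (hF.trans (zero_pow two_ne_zero))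

lemma pow_pow_eq_self_of_card_eq_sq (hF : Fintype.card F = q ^ 2) (x : F) : (x ^ q) ^ q = x := by
  rw [← pow_mul, ← sq, ← hF, FiniteField.pow_card]

lemma add_pow_of_card_eq_sq (hF : Fintype.card F = q ^ 2) (x y : F) :
    (x + y) ^ q = x ^ q + y ^ q := by
  obtain ⟨p, _⟩ := CharP.exists F
  obtain ⟨k, hp, hk⟩ := FiniteField.card F p
  have : q ∣ p ^ (k : ℕ) := hk ▸ hF ▸ dvd_pow_self q two_ne_zero
  obtain ⟨i, -, rfl⟩ := (Nat.dvd_prime_pow hp).1 this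
  have : Fact p.Prime := ⟨hp⟩
  exact add_pow_char_pow x y p i

def conjHom (hF : Fintype.card F = q ^ 2) : F →+* F where
  toFun x := x ^ q
  map_one' := one_pow q
  map_mul' x y := mul_pow x y q
  map_zero' := zero_pow (ne_zero_of_card_eq_sq hF)
  map_add' := add_pow_of_card_eq_sq hF

lemma conjHom_apply (hF : Fintype.card F = q ^ 2) (x : F) : conjHom hF x = x ^ q := rfl

end FiniteField

section RowIndependence

variable {F : Type} [Field F] {ι : Type}

lemma linearIndependent_row_map {κ : Type} [Fintype κ] {σ : F →+* F}
    (hσ : Function.Involutive σ) {G : Matrix κ ι F} (hG : LinearIndependent F G.row) :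
    LinearIndependent F (G.map σ).row := by
  rw [Fintype.linearIndependent_iff] at hG ⊢
  intro c hc i
  have hσc : ∑ i, σ (c i) • G.row i = 0 := by
    funext j
    simpa [hσ _] using congrArg σ (congrFun hc j)
  simpa using hG (σ ∘ c) hσc i

lemma linearIndependent_row_of_head_ne_zero {κ : Type} {n : ℕ}
    {A : Matrix (Fin (n + 1)) ι F} (e : κ → ι) (hA0 : A 0 ≠ 0) (hA0e : ∀ j, A 0 (e j) = 0)
    (hA : LinearIndependent F fun (i : Fin n) j => A i.succ (e j)) :
    LinearIndependent F A.row := by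
  rw [Fintype.linearIndependent_iff] at hA ⊢
  intro c hc
  have htail : ∀ i : Fin n, c i.succ = 0 := by
    refine hA (fun i => c i.succ) (funext fun j => ?_)
    simpa [Fin.sum_univ_succ, hA0e] using congrFun hc (e j)
  have hhead : c 0 • A.row 0 = 0 := by
    simpa [Fin.sum_univ_succ, htail] using hc
  exact Fin.cases ((smul_eq_zero.1 hhead).resolve_right hA0) htail

lemma linearIndependent_row_smul_of_mul_eq_one {n : ℕ} {a : F} (ha : a ≠ 0)
    {L B : Matrix (Fin n) (Fin n) F} (hL : L * B = 1) : LinearIndependent F (a • L).row := by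
  refine Matrix.linearIndependent_rows_of_isUnit ?_
  rw [Matrix.isUnit_iff_isUnit_det, det_smul]
  exact (ha.isUnit.pow _).mul (isUnit_det_of_right_inverse hL)

lemma finrank_rowSpan {k : ℕ} {G : Matrix (Fin k) ι F} (hG : LinearIndependent F G.row) :
    Module.finrank F (rowSpan G) = k :=
  (finrank_span_eq_card hG).trans (Fintype.card_fin k)

end RowIndependence

section HermitianDual

variable {F : Type} [Field F] {q : ℕ} {ι : Type} [Fintype ι]

lemma hermInner_smul_smul (c d : F) (x y : ι → F) :
    hermInner q (c • x) (d • y) = c * d ^ q * hermInner q x y := by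
  simp only [hermInner, Pi.smul_apply, smul_eq_mul, mul_pow, Finset.mul_sum]
  exact Finset.sum_congr rfl fun _ _ => by ring

lemma hermInner_row_eq_mul_apply {κ : Type} (A : Matrix κ ι F) (i j : κ) :
    hermInner q (A i) (A j) = (A * (A.map (· ^ q))ᵀ) i j := rfl

lemma hermInner_swap [Fintype F] (hF : Fintype.card F = q ^ 2) (x y : ι → F) :
    hermInner q y x = hermInner q x y ^ q := by
  rw [hermInner, hermInner, ← conjHom_apply hF, map_sum]
  refine Finset.sum_congr rfl fun i _ => ?_
  rw [map_mul, conjHom_apply, conjHom_apply, pow_pow_eq_self_of_card_eq_sq hF, mul_comm]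

lemma hermInner_eq_pow_mulVec_map [Fintype F] (hF : Fintype.card F = q ^ 2) {κ : Type}
    (G : Matrix κ ι F) (i : κ) (y : ι → F) :
    hermInner q (G i) y = ((G.map (· ^ q)) *ᵥ y) i ^ q := by
  rw [hermInner, mulVec, dotProduct, ← conjHom_apply hF, map_sum]
  refine Finset.sum_congr rfl fun j _ => ?_
  rw [map_mul, conjHom_apply, conjHom_apply, map_apply, pow_pow_eq_self_of_card_eq_sq hF]

lemma mem_hermDual_span_iff {S : Set (ι → F)} {y : ι → F} :
    y ∈ hermDual q (Submodule.span F S : Set (ι → F)) ↔ ∀ x ∈ S, hermInner q x y = 0 := by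
  refine ⟨fun hy x hx => hy x (Submodule.subset_span hx), fun hS x hx => ?_⟩
  induction hx using Submodule.span_induction with
  | mem x hx => exact hS x hx
  | zero => simp [hermInner]
  | add x x' _ _ hx hx' =>
    simp only [hermInner, Pi.add_apply, add_mul, Finset.sum_add_distrib] at *
    rw [hx, hx', add_zero]
  | smul c x _ hx =>
    simp only [hermInner, Pi.smul_apply, smul_eq_mul, mul_assoc, ← Finset.mul_sum] at *
    rw [hx, mul_zero]

lemma hermDual_rowSpan_eq_ker [Fintype F] (hF : Fintype.card F = q ^ 2) {k : ℕ}
    (G : Matrix (Fin k) ι F) :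
    hermDual q (rowSpan G : Set (ι → F)) = LinearMap.ker (G.map (· ^ q)).mulVecLin := by
  ext y
  simp only [rowSpan, mem_hermDual_span_iff, Set.forall_mem_range,
    hermInner_eq_pow_mulVec_map hF, pow_eq_zero_iff (ne_zero_of_card_eq_sq hF), SetLike.mem_coe,
    LinearMap.mem_ker, mulVecLin_apply, funext_iff, Pi.zero_apply]

theorem rowSpan_eq_hermDual_of_orthogonal [Fintype F] (hF : Fintype.card F = q ^ 2) {k : ℕ}
    (G : Matrix (Fin k) ι F) (hG : LinearIndependent F G.row)
    (horth : ∀ i j, hermInner q (G i) (G j) = 0) (hk : 2 * k = Fintype.card ι) :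
    (rowSpan G : Set (ι → F)) = hermDual q (rowSpan G) := by
  set M := G.map (· ^ q)
  have hM : LinearIndependent F M.row :=
    linearIndependent_row_map (σ := conjHom hF) (pow_pow_eq_self_of_card_eq_sq hF) hG
  have hker : Module.finrank F (LinearMap.ker M.mulVecLin) = k := by
    have := LinearMap.finrank_range_add_finrank_ker M.mulVecLin
    rw [← Matrix.rank, hM.rank_matrix, Module.finrank_fintype_fun_eq_card] at this
    simp only [Fintype.card_fin] at this
    omega
  have hle : rowSpan G ≤ LinearMap.ker M.mulVecLin := by
    rw [rowSpan, Submodule.span_le, ← hermDual_rowSpan_eq_ker hF]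
    rintro _ ⟨i, rfl⟩
    exact mem_hermDual_span_iff.2 fun _ ⟨j, hj⟩ => hj ▸ horth j i
  rw [hermDual_rowSpan_eq_ker hF,
    Submodule.eq_of_le_of_finrank_eq hle ((finrank_rowSpan hG).trans hker.symm)]

end HermitianDual

section BorderedMatrix

variable {F : Type} [Field F] {q : ℕ}

/-- The vector `(x, u, y, v)` of length `2n + 2`, with blocks of sizes `1, n, 1, n`. -/
def blockVec {κ : Type} (x : F) (u : κ → F) (y : F) (v : κ → F) : (Unit ⊕ κ) ⊕ (Unit ⊕ κ) → F :=
  Sum.elim (Sum.elim (fun _ => x) u) (Sum.elim (fun _ => y) v)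

lemma hermInner_blockVec {κ : Type} [Fintype κ] (x x' y y' : F) (u u' v v' : κ → F) :
    hermInner q (blockVec x u y v) (blockVec x' u' y' v') =
      x * x' ^ q + hermInner q u u' + (y * y' ^ q + hermInner q v v') := by
  simp [hermInner, blockVec, Fintype.sum_sum_type]

lemma sum_offDiag {n : ℕ} (i : Fin n) : ∑ j, (if j = i then (0 : F) else 1) = n - 1 := by
  simp [Finset.sum_ite, Finset.filter_ne', Nat.cast_sub i.pos]

lemma hermInner_offDiag {n : ℕ} (hq : q ≠ 0) (u : Fin n → F) (i : Fin n) :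
    hermInner q u (fun j => if j = i then 0 else 1) = ∑ j, u j - u i := by
  simp only [hermInner, apply_ite (· ^ q), zero_pow hq, one_pow, mul_ite, mul_zero, mul_one,
    Finset.sum_ite, Finset.sum_const_zero, Finset.filter_ne', Finset.mem_univ,
    Finset.sum_erase_eq_sub, zero_add]

lemma topRow_ne_zero {n : ℕ} {θ γ α : F} (h2 : (2 : F) ≠ 0) (hn : (1 : F) - n ≠ 0) (hγ : γ ≠ 0)
    (hα : α = (2 * (1 - n) - θ) * (γ ^ q)⁻¹) (u v : Fin n → F) : blockVec θ u α v ≠ 0 := by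
  intro h
  have hθ0 : θ = 0 := congrFun h (Sum.inl (Sum.inl ()))
  have hα0 : α = 0 := congrFun h (Sum.inr (Sum.inl ()))
  rw [hα, hθ0, sub_zero] at hα0
  exact mul_ne_zero (mul_ne_zero h2 hn) (inv_ne_zero (pow_ne_zero q hγ)) hα0

variable [Fintype F] {n : ℕ} {θ γ α : F}

lemma hermInner_topRow_self (hF : Fintype.card F = q ^ 2) (hθq : θ ^ q = θ)
    (hγ : γ ^ (q + 1) = 1 - n) (hγ0 : γ ≠ 0)
    (hθ : (θ - 2) ^ 2 * n - (2 * θ ^ 2 - 4 * θ + 4) = 0)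
    (hα : α = (2 * (1 - n) - θ) * (γ ^ q)⁻¹) :
    hermInner q (blockVec θ (fun _ : Fin n => 2) α 0) (blockVec θ (fun _ => 2) α 0) = 0 := by
  have hq := ne_zero_of_card_eq_sq hF
  have hαq : α ^ q = (2 * (1 - n) - θ) * γ⁻¹ := by
    rw [← conjHom_apply hF, hα]
    simp only [map_mul, map_inv₀, map_sub, map_one, map_natCast, map_ofNat]
    rw [conjHom_apply, conjHom_apply, hθq, pow_pow_eq_self_of_card_eq_sq hF]
  have h2 : (2 : F) ^ q = 2 := map_ofNat (conjHom hF) 2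
  rw [hermInner_blockVec, hαq, hα]
  simp only [hθq, hermInner, h2, sum_const, card_univ, Fintype.card_fin, nsmul_eq_mul,
    Pi.zero_apply, zero_pow hq, mul_zero, add_zero]
  rw [pow_succ] at hγ
  field_simp
  -- with `c = 2(1 - n) - θ`: `α α^q = c² / (1 - n)`, and `(θ² + 4n)(1 - n) + c²` is minus the
  -- left side of `hθ`
  linear_combination (θ ^ 2 + 4 * n) * hγ - hθ

lemma hermInner_topRow_row (hF : Fintype.card F = q ^ 2) (hγ : γ ≠ 0)
    (hα : α = (2 * (1 - n) - θ) * (γ ^ q)⁻¹) (i : Fin n) (v : Fin n → F) :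
    hermInner q (blockVec θ (fun _ => 2) α 0) (blockVec 1 (fun j => if j = i then 0 else 1) γ v)
      = 0 := by
  have hq := ne_zero_of_card_eq_sq hF
  rw [hermInner_blockVec, hermInner_offDiag hq, hα, mul_assoc, inv_mul_cancel₀ (pow_ne_zero q hγ)]
  simp only [one_pow, mul_one, sum_const, card_univ, Fintype.card_fin, nsmul_eq_mul, hermInner,
    Pi.zero_apply, zero_mul]
  ring

lemma hermInner_row_row (hF : Fintype.card F = q ^ 2) {a : F}
    {L : Matrix (Fin n) (Fin n) F} (hL : L * (L.map (· ^ q))ᵀ = 1) (ha : a ^ (q + 1) = -1)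
    (hγ : γ ^ (q + 1) = 1 - n) (i i' : Fin n) :
    hermInner q (blockVec 1 (fun j => if j = i then 0 else 1) γ (a • L i))
      (blockVec 1 (fun j => if j = i' then 0 else 1) γ (a • L i')) = 0 := by
  have hq := ne_zero_of_card_eq_sq hF
  rw [hermInner_blockVec, hermInner_offDiag hq, hermInner_smul_smul, hermInner_row_eq_mul_apply, hL,
    ← pow_succ' a q, ha, ← pow_succ' γ q, hγ, sum_offDiag]
  rcases eq_or_ne i i' with rfl | h
  · simp only [one_pow, mul_one, ↓reduceIte, sub_zero, add_sub_cancel, one_apply_eq]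
    ring
  · simp [h, h.symm, one_apply]

end BorderedMatrix

theorem stmt11_general (p m q n : ℕ) (hodd : Odd p)
    (hq : q = p ^ m)
    (F : Type) [Field F] [Fintype F] (hF : Fintype.card F = q ^ 2)
    (a : F) (ha : a ^ (q + 1) = -1)
    (L : Matrix (Fin n) (Fin n) F) (hL : L * (L.map (· ^ q))ᵀ = 1)
    (α β γ δ lam θ : F)
    (hδ : δ = 1)
    (hγ : γ ^ (q + 1) = 1 - (n : F)) (hγ0 : (1 : F) - (n : F) ≠ 0)
    (hθp : θ ^ p = θ)
    (hθ : (θ - 2) ^ 2 * (n : F) - (2 * θ ^ 2 - 4 * θ + 4) = 0)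
    (hβ : β = 2)
    (hα : α = (2 * (1 - (n : F)) - θ) * (γ ^ q)⁻¹)
    (hlam : lam = 0)
    (G : Matrix (Fin (n + 1)) ((Unit ⊕ Fin n) ⊕ (Unit ⊕ Fin n)) F)
    (hG1 : G 0 (Sum.inl (Sum.inl ())) = θ)
    (hG2 : ∀ j, G 0 (Sum.inl (Sum.inr j)) = β)
    (hG3 : G 0 (Sum.inr (Sum.inl ())) = α)
    (hG4 : ∀ j, G 0 (Sum.inr (Sum.inr j)) = lam * ∑ k, L k j)
    (hG5 : ∀ i : Fin n, G i.succ (Sum.inl (Sum.inl ())) = δ)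
    (hG6 : ∀ i j : Fin n, G i.succ (Sum.inl (Sum.inr j)) = if j = i then 0 else 1)
    (hG7 : ∀ i : Fin n, G i.succ (Sum.inr (Sum.inl ())) = γ)
    (hG8 : ∀ i j : Fin n, G i.succ (Sum.inr (Sum.inr j)) = a * L i j) :
    (rowSpan G : Set ((Unit ⊕ Fin n) ⊕ (Unit ⊕ Fin n) → F)) = hermDual q (rowSpan G) ∧
    Module.finrank F (rowSpan G) = n + 1 := by
  subst hδ hβ hlam
  have hθq : θ ^ q = θ := hq ▸ pow_pow_eq_self_of_pow_eq_self m hθp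
  have hγne : γ ≠ 0 := by
    rintro rfl
    exact hγ0 (by simpa using hγ.symm)
  have hrow0 : G 0 = blockVec θ (fun _ => 2) α 0 := by
    funext c
    rcases c with ((_ | j) | (_ | j)) <;> simp [blockVec, hG1, hG2, hG3, hG4]
  have hrows (i : Fin n) : G i.succ = blockVec 1 (fun j => if j = i then 0 else 1) γ (a • L i) := by
    funext c
    rcases c with ((_ | j) | (_ | j)) <;> simp [blockVec, hG5, hG6, hG7, hG8]
  have horth (i j) : hermInner q (G i) (G j) = 0 := by
    cases i using Fin.cases <;> cases j using Fin.cases <;> simp only [hrow0, hrows]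
    · exact hermInner_topRow_self hF hθq hγ hγne hθ hα
    · exact hermInner_topRow_row hF hγne hα _ _
    · rw [hermInner_swap hF, hermInner_topRow_row hF hγne hα, zero_pow (ne_zero_of_card_eq_sq hF)]
    · exact hermInner_row_row hF hL ha hγ _ _
  have ha0 : a ≠ 0 := by
    rintro rfl
    simp at ha
  have h2 : (2 : F) ≠ 0 := two_ne_zero_of_odd_card (by rw [hF, hq]; exact hodd.pow.pow)
  have hind : LinearIndependent F G.row :=
    linearIndependent_row_of_head_ne_zero (fun j => Sum.inr (Sum.inr j))
      (hrow0 ▸ topRow_ne_zero h2 hγ0 hγne hα _ _) (by simp [hG4])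
      (by simp only [hG8]; exact linearIndependent_row_smul_of_mul_eq_one ha0 hL)
  exact ⟨rowSpan_eq_hermDual_of_orthogonal hF G hind horth (by simp; ring), finrank_rowSpan hind⟩

/-- Theorem 2, case 1) of the paper. With `p` odd, `n ≢ 3 (mod p)`,
`δ = 1`, `γ^{q+1} = 1 - n ≠ 0`, `θ ∈ F_p` with `(θ-2)²n - (2θ²-4θ+4) = 0`,
`β = 2`, `α = (2(1-n) - θ)·γ^{-q}`, `λ = 0`, the bordered matrix `G` generates a
Hermitian self-dual code of length `2n+2` and dimension `n+1`. -/
theorem stmt11 (p m q n : ℕ) (hp : p.Prime) (hodd : Odd p) (hm : 0 < m)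
    (hq : q = p ^ m) (hnp : (n : ZMod p) ≠ 3)
    (F : Type) [Field F] [Fintype F] (hF : Fintype.card F = q ^ 2)
    (a : F) (ha : a ^ (q + 1) = -1)
    (L : Matrix (Fin n) (Fin n) F) (hL : L * (L.map (· ^ q))ᵀ = 1)
    (α β γ δ lam θ : F)
    (hδ : δ = 1)
    (hγ : γ ^ (q + 1) = 1 - (n : F)) (hγ0 : (1 : F) - (n : F) ≠ 0)
    (hθp : θ ^ p = θ)
    (hθ : (θ - 2) ^ 2 * (n : F) - (2 * θ ^ 2 - 4 * θ + 4) = 0)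
    (hβ : β = 2)
    (hα : α = (2 * (1 - (n : F)) - θ) * (γ ^ q)⁻¹)
    (hlam : lam = 0)
    (G : Matrix (Fin (n + 1)) ((Unit ⊕ Fin n) ⊕ (Unit ⊕ Fin n)) F)
    (hG1 : G 0 (Sum.inl (Sum.inl ())) = θ)
    (hG2 : ∀ j, G 0 (Sum.inl (Sum.inr j)) = β)
    (hG3 : G 0 (Sum.inr (Sum.inl ())) = α)
    (hG4 : ∀ j, G 0 (Sum.inr (Sum.inr j)) = lam * ∑ k, L k j)
    (hG5 : ∀ i : Fin n, G i.succ (Sum.inl (Sum.inl ())) = δ)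
    (hG6 : ∀ i j : Fin n, G i.succ (Sum.inl (Sum.inr j)) = if j = i then 0 else 1)
    (hG7 : ∀ i : Fin n, G i.succ (Sum.inr (Sum.inl ())) = γ)
    (hG8 : ∀ i j : Fin n, G i.succ (Sum.inr (Sum.inr j)) = a * L i j) :
    (rowSpan G : Set ((Unit ⊕ Fin n) ⊕ (Unit ⊕ Fin n) → F)) = hermDual q (rowSpan G) ∧
    Module.finrank F (rowSpan G) = n + 1 :=
  stmt11_general p m q n hodd hq F hF a ha L hL α β γ δ lam θ hδ hγ hγ0 hθp hθ hβ hα hlam G hG1 hG2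
    hG3 hG4 hG5 hG6 hG7 hG8
end
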